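/- Let q = p^n with p prime and n ≥ 1, and let G = PSL(2, F_q). Then every p-subgroup P of G whose order satisfies p ≤ |P| < p^n (equivalently, every nontrivial p-subgroup that is not a Sylow p-subgroup of G) is not pronormal in G. -/

import Mathlib

/-- The conjugate `H^g := g⁻¹ H g` of a subgroup `H` by an element `g`. -/
def Subgroup.conjugate {G : Type*} [Group G] (H : Subgroup G) (g : G) : Subgroup G :=
  H.map (MulAut.conj g⁻¹).toMonoidHom

/-- A subgroup `H` of a group `G` is pronormal in `G` if for every `g ∈ G` there exists
`x ∈ ⟨H, H^g⟩` such that `H^x = H^g`. -/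
def IsPronormal {G : Type*} [Group G] (H : Subgroup G) : Prop :=
  ∀ g : G, ∃ x ∈ (H ⊔ H.conjugate g : Subgroup G), H.conjugate x = H.conjugate g

/-!
Every `p`-subgroup of `PSL(2, F)` is conjugate into the image `U ≅ (F, +)` of the upper
unitriangular matrices, an abelian Sylow `p`-subgroup, and pronormality is invariant under
conjugation. For `P ≤ U` and a conjugate `P^t ≤ U`, the element of `⟨P, P^t⟩ ≤ U` given by
pronormality centralizes `P`, so pronormality forces `P^t = P`. Conjugation by
`diag(c⁻¹, c)` normalizes `U` and acts on `F` as multiplication by `c²`. As every element of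
a finite field is a sum of two squares, an additive subgroup of `F` stable under all these
maps is an ideal, hence `0` or `F`; so a nontrivial proper `P ≤ U` is moved into `U` but
not onto itself by one of them.
-/

open scoped MatrixGroups

namespace Subgroup

variable {G : Type*} [Group G]

lemma mem_conjugate_iff {H : Subgroup G} {g y : G} :
    y ∈ H.conjugate g ↔ ∃ h ∈ H, g⁻¹ * h * g = y := by
  simp [Subgroup.conjugate]

lemma conjugate_conjugate (H : Subgroup G) (g h : G) :
    (H.conjugate g).conjugate h = H.conjugate (g * h) := by
  ext y
  simp only [mem_conjugate_iff]
  constructor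
  · rintro ⟨_, ⟨k, hk, rfl⟩, rfl⟩
    exact ⟨k, hk, by group⟩
  · rintro ⟨k, hk, rfl⟩
    exact ⟨_, ⟨k, hk, rfl⟩, by group⟩

lemma conjugate_sup (H K : Subgroup G) (g : G) :
    (H ⊔ K).conjugate g = H.conjugate g ⊔ K.conjugate g :=
  map_sup _ _ _

lemma card_conjugate (H : Subgroup G) (g : G) : Nat.card (H.conjugate g) = Nat.card H :=
  (Nat.card_congr (H.equivMapOfInjective _ (MulAut.conj g⁻¹).injective).toEquiv).symm

lemma conjugate_eq_self_of_commute {H : Subgroup G} {x : G} (hx : ∀ h ∈ H, Commute h x) :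
    H.conjugate x = H := by
  have hfix : ∀ h ∈ H, x⁻¹ * h * x = h := fun h hh => by
    rw [mul_assoc, (hx h hh).eq, inv_mul_cancel_left]
  ext y
  rw [mem_conjugate_iff]
  refine ⟨?_, fun hy => ⟨y, hy, hfix y hy⟩⟩
  rintro ⟨h, hh, rfl⟩
  rwa [hfix h hh]

end Subgroup

lemma IsPGroup.exists_conjugate_le {G : Type*} [Group G] [Finite G] {p : ℕ} [Fact p.Prime]
    {H : Subgroup G} (hH : IsPGroup p H) (S : Sylow p G) : ∃ g : G, H.conjugate g ≤ S := by
  obtain ⟨R, hHR⟩ := hH.exists_le_sylow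
  obtain ⟨g, rfl⟩ := MulAction.exists_smul_eq G R S
  refine ⟨g⁻¹, fun y hy => ?_⟩
  obtain ⟨h, hh, rfl⟩ := Subgroup.mem_conjugate_iff.mp hy
  rw [Sylow.coe_subgroup_smul, inv_inv]
  exact Subgroup.smul_mem_pointwise_smul _ _ _ (hHR hh)

namespace IsPronormal

variable {G : Type*} [Group G] {H : Subgroup G}

lemma conjugate (hH : IsPronormal H) (g : G) : IsPronormal (H.conjugate g) := by
  intro k
  obtain ⟨x, hx, hxk⟩ := hH (g * k * g⁻¹)
  refine ⟨g⁻¹ * x * g, ?_, ?_⟩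
  · have hsup : H.conjugate g ⊔ (H.conjugate g).conjugate k
        = (H ⊔ H.conjugate (g * k * g⁻¹)).conjugate g := by
      rw [Subgroup.conjugate_sup, Subgroup.conjugate_conjugate, Subgroup.conjugate_conjugate]
      group
    rw [hsup]
    exact Subgroup.mem_conjugate_iff.mpr ⟨x, hx, rfl⟩
  · calc (H.conjugate g).conjugate (g⁻¹ * x * g) = (H.conjugate x).conjugate g := by
          rw [Subgroup.conjugate_conjugate, Subgroup.conjugate_conjugate]; group
      _ = (H.conjugate g).conjugate k := by
          rw [hxk, Subgroup.conjugate_conjugate, Subgroup.conjugate_conjugate]; group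

lemma conjugate_eq_self_of_le {A : Subgroup G} [IsMulCommutative A] (hH : IsPronormal H)
    (hHA : H ≤ A) {g : G} (hgA : H.conjugate g ≤ A) : H.conjugate g = H := by
  obtain ⟨x, hx, hxg⟩ := hH g
  have hxA : x ∈ A := sup_le hHA hgA hx
  rw [← hxg]
  exact Subgroup.conjugate_eq_self_of_commute fun h hh =>
    setLike_mul_comm (hHA hh) hxA

end IsPronormal

open Polynomial in
theorem FiniteField.exists_sq_add_sq {F : Type*} [Field F] [Fintype F] (x : F) :
    ∃ a b : F, a ^ 2 + b ^ 2 = x := by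
  by_cases hF : ringChar F = 2
  · obtain ⟨r, hr⟩ := FiniteField.isSquare_of_char_two hF x
    exact ⟨r, 0, by rw [hr]; ring⟩
  · obtain ⟨a, b, hab⟩ := FiniteField.exists_root_sum_quadratic (degree_X_pow 2)
      (degree_X_pow_sub_C two_pos x) (FiniteField.odd_card_of_char_ne_two hF)
    refine ⟨a, b, ?_⟩
    simp only [eval_pow, eval_X, eval_sub, eval_C] at hab
    linear_combination hab

theorem AddSubgroup.eq_bot_or_eq_top_of_sq_mul_mem {F : Type*} [Field F] [Fintype F]
    (V : AddSubgroup F) (hV : ∀ c ≠ (0 : F), ∀ v ∈ V, c ^ 2 * v ∈ V) : V = ⊥ ∨ V = ⊤ := by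
  have hsq : ∀ c v : F, v ∈ V → c ^ 2 * v ∈ V := fun c v hv => by
    rcases eq_or_ne c 0 with rfl | hc
    · simp [V.zero_mem]
    · exact hV c hc v hv
  refine V.bot_or_exists_ne_zero.imp id fun ⟨v, hv, hv0⟩ => eq_top_iff.mpr fun x _ => ?_
  obtain ⟨a, b, hab⟩ := FiniteField.exists_sq_add_sq (x / v)
  have hx : x = a ^ 2 * v + b ^ 2 * v := by rw [← add_mul, hab, div_mul_cancel₀ x hv0]
  exact hx ▸ V.add_mem (hsq a v hv) (hsq b v hv)

namespace Matrix.SpecialLinearGroup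

variable {R : Type*} [CommRing R]

def upperRight (a : R) : SL(2, R) := ⟨!![1, a; 0, 1], by simp [det_fin_two_of]⟩

def diagUnit (c : Rˣ) : SL(2, R) := ⟨!![((c⁻¹ : Rˣ) : R), 0; 0, c], by simp [det_fin_two_of]⟩

@[simp] lemma coe_upperRight (a : R) :
    (upperRight a : Matrix (Fin 2) (Fin 2) R) = !![1, a; 0, 1] :=
  rfl

@[simp] lemma coe_diagUnit (c : Rˣ) :
    (diagUnit c : Matrix (Fin 2) (Fin 2) R) = !![((c⁻¹ : Rˣ) : R), 0; 0, c] :=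
  rfl

variable (R) in
def upperRightHom : Multiplicative R →* SL(2, R) where
  toFun a := upperRight a.toAdd
  map_one' := Subtype.ext <| by simp [one_fin_two]
  map_mul' a b := Subtype.ext <| by simp [coe_mul, add_comm]

@[simp] lemma upperRightHom_apply (a : Multiplicative R) :
    upperRightHom R a = upperRight a.toAdd :=
  rfl

lemma diagUnit_conj_upperRight (c : Rˣ) (b : R) :
    (diagUnit c)⁻¹ * upperRight b * diagUnit c = upperRight ((c : R) ^ 2 * b) := by
  apply Subtype.ext
  simp [coe_mul, coe_inv, adjugate_fin_two_of]
  ring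

end Matrix.SpecialLinearGroup

namespace Matrix.ProjectiveSpecialLinearGroup

open Matrix.SpecialLinearGroup

lemma card_dvd_card_GL (ι R : Type*) [Fintype ι] [DecidableEq ι] [CommRing R] :
    Nat.card (ProjectiveSpecialLinearGroup ι R) ∣ Nat.card (GL ι R) :=
  (Subgroup.card_quotient_dvd_card _).trans (Subgroup.card_dvd_of_injective _ toGL_injective)

variable (R : Type*) [CommRing R]

def unipotentHom : Multiplicative R →* PSL(2, R) :=
  (QuotientGroup.mk' _).comp (upperRightHom R)

def unipotent : Subgroup PSL(2, R) := (unipotentHom R).range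

instance : IsMulCommutative (unipotent R) := by
  unfold unipotent; infer_instance

lemma unipotentHom_injective : Function.Injective (unipotentHom R) := by
  rw [injective_iff_map_eq_one]
  intro a ha
  obtain ⟨r, -, hr⟩ := mem_center_iff.mp ((QuotientGroup.eq_one_iff _).mp ha)
  simpa using (congrFun (congrFun hr 0) 1).symm

lemma card_unipotent : Nat.card (unipotent R) = Nat.card R :=
  (Nat.card_congr (MonoidHom.ofInjective (unipotentHom_injective R)).toEquiv).symm

variable {R}

lemma exists_conj_unipotentHom (c : Rˣ) : ∃ t : PSL(2, R), ∀ b : R,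
    t⁻¹ * unipotentHom R (.ofAdd b) * t = unipotentHom R (.ofAdd ((c : R) ^ 2 * b)) :=
  ⟨diagUnit c, fun b => by simp [unipotentHom, ← diagUnit_conj_upperRight]⟩

variable {F : Type*} [Field F] [Fintype F]

lemma not_dvd_index_unipotent {p n : ℕ} (hp : p.Prime) (hF : Fintype.card F = p ^ n) :
    ¬ p ∣ (unipotent F).index := by
  set q := Fintype.card F
  have hq : 1 < q := Fintype.one_lt_card
  have hpq : p ∣ q := hF ▸ dvd_pow_self p (by rintro rfl; simp [hF] at hq)
  have hGL : Nat.card (GL (Fin 2) F) = q * ((q ^ 2 - 1) * (q - 1)) := by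
    rw [card_GL_field, Fin.prod_univ_two]
    simp [sq, ← Nat.mul_sub_one]
    ring
  have hindex : (unipotent F).index ∣ (q ^ 2 - 1) * (q - 1) := by
    refine Nat.dvd_of_mul_dvd_mul_left (by omega : 0 < q) ?_
    have hU : Nat.card (unipotent F) = q := by rw [card_unipotent, Nat.card_eq_fintype_card]
    rw [← hGL, ← hU, Subgroup.card_mul_index]
    exact card_dvd_card_GL _ _
  have not_dvd_pred : ∀ m, p ∣ m → 0 < m → ¬ p ∣ m - 1 := fun m hm hm0 h =>
    hp.not_dvd_one (by simpa [Nat.sub_sub_self hm0] using Nat.dvd_sub hm h)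
  intro h
  rcases hp.dvd_mul.mp (h.trans hindex) with h | h
  · exact not_dvd_pred _ (hpq.trans (dvd_pow_self q two_ne_zero)) (by positivity) h
  · exact not_dvd_pred _ hpq (by omega) h

theorem not_isPronormal_of_le_unipotent {P : Subgroup PSL(2, F)} (hPU : P ≤ unipotent F)
    (hlo : 1 < Nat.card P) (hhi : Nat.card P < Fintype.card F) : ¬ IsPronormal P := by
  intro hP
  let V : AddSubgroup F := (P.comap (unipotentHom F)).toAddSubgroup'
  have hV : Nat.card V = Nat.card P := by
    conv_rhs => rw [← Subgroup.map_comap_eq_self hPU]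
    exact (Subgroup.card_map_of_injective (K := P.comap _) (unipotentHom_injective F)).symm
  obtain ⟨c, hc, v, hv, hcv⟩ : ∃ c ≠ (0 : F), ∃ v ∈ V, c ^ 2 * v ∉ V := by
    by_contra! h
    rcases V.eq_bot_or_eq_top_of_sq_mul_mem h with h | h
    · rw [h, AddSubgroup.card_bot] at hV
      omega
    · rw [h, AddSubgroup.card_top, Nat.card_eq_fintype_card] at hV
      omega
  obtain ⟨t, ht⟩ := exists_conj_unipotentHom (Units.mk0 c hc)
  simp only [Units.val_mk0] at ht
  have htU : P.conjugate t ≤ unipotent F := by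
    intro y hy
    obtain ⟨h, hh, rfl⟩ := Subgroup.mem_conjugate_iff.mp hy
    obtain ⟨a, rfl⟩ := hPU hh
    exact ⟨_, (ht a.toAdd).symm⟩
  apply hcv
  change unipotentHom F (.ofAdd (c ^ 2 * v)) ∈ P
  rw [← hP.conjugate_eq_self_of_le hPU htU, ← ht]
  exact Subgroup.mem_conjugate_iff.mpr ⟨_, hv, rfl⟩

end Matrix.ProjectiveSpecialLinearGroup

open Matrix.ProjectiveSpecialLinearGroup in
theorem stmt8_general (p n : ℕ) (hp : p.Prime)
    (F : Type*) [Field F] [Fintype F] (hF : Fintype.card F = p ^ n)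
    (P : Subgroup (Matrix.ProjectiveSpecialLinearGroup (Fin 2) F))
    (hPp : IsPGroup p P) (hlo : p ≤ Nat.card P) (hhi : Nat.card P < p ^ n) :
    ¬ IsPronormal P := by
  have : Fact p.Prime := ⟨hp⟩
  have hU : IsPGroup p (unipotent F) :=
    IsPGroup.of_card (by rw [card_unipotent, Nat.card_eq_fintype_card, hF])
  obtain ⟨g, hg⟩ := hPp.exists_conjugate_le (hU.toSylow (not_dvd_index_unipotent hp hF))
  intro hP
  refine not_isPronormal_of_le_unipotent hg ?_ ?_ (hP.conjugate g) <;> rw [Subgroup.card_conjugate]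
  · exact hp.one_lt.trans_le hlo
  · exact hF ▸ hhi

theorem stmt8 (p n : ℕ) (hp : p.Prime) (hn : 1 ≤ n)
    (F : Type*) [Field F] [Fintype F] (hF : Fintype.card F = p ^ n)
    (P : Subgroup (Matrix.ProjectiveSpecialLinearGroup (Fin 2) F))
    (hPp : IsPGroup p P) (hlo : p ≤ Nat.card P) (hhi : Nat.card P < p ^ n) :
    ¬ IsPronormal P :=
  stmt8_general p n hp F hF P hPp hlo hhi
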